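/- arXiv:1705.01657 — 3 statements merged into one kernel-verified Lean document; each statement's English description precedes it below -/
import Mathlib

section
/- Let R be a commutative ring, μ ∈ R, and let (x₁,y₁,z₁), (x₂,y₂,z₂) ∈ R³ both satisfy x³ + y³ + z³ = 3μxyz. Set x₃ = x₂y₁²z₂ − x₁y₂²z₁, y₃ = x₁²y₂z₂ − x₂²y₁z₁, z₃ = x₂y₂z₁² − x₁y₁z₂². Then x₃³ + y₃³ + z₃³ = 3μ x₃y₃z₃. -/
/-!
Write `F = C - 3μM` with `C = x³ + y³ + z³` and `M = xyz`, and let `σ(P, Q)` (`mixedCubes`) be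
the sum of the three products `(one coordinate of P)³ · (the other two coordinates of Q)³`.
Expanding the addition formula gives two identities with integer coefficients,
`M(P₃) = M(P₁) σ(P₁, P₂) - M(P₂) σ(P₂, P₁)` and
`C(P₃) = C(P₁) σ(P₁, P₂) - C(P₂) σ(P₂, P₁) - 3 M(P₁) M(P₂) (C(P₁) M(P₂) - C(P₂) M(P₁))`,
from which `F(P₃) = F(P₁) (σ(P₁, P₂) - 3 M(P₁) M(P₂)²) - F(P₂) (σ(P₂, P₁) - 3 M(P₁)² M(P₂))`.
-/

namespace HessianCurve

variable {R : Type*} [CommRing R]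

def form (μ x y z : R) : R :=
  x ^ 3 + y ^ 3 + z ^ 3 - 3 * μ * (x * y * z)

def addX (x₁ y₁ z₁ x₂ y₂ z₂ : R) : R := x₂ * y₁ ^ 2 * z₂ - x₁ * y₂ ^ 2 * z₁

def addY (x₁ y₁ z₁ x₂ y₂ z₂ : R) : R := x₁ ^ 2 * y₂ * z₂ - x₂ ^ 2 * y₁ * z₁

def addZ (x₁ y₁ z₁ x₂ y₂ z₂ : R) : R := x₂ * y₂ * z₁ ^ 2 - x₁ * y₁ * z₂ ^ 2

def mixedCubes (x₁ y₁ z₁ x₂ y₂ z₂ : R) : R :=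
  x₁ ^ 3 * y₂ ^ 3 * z₂ ^ 3 + y₁ ^ 3 * x₂ ^ 3 * z₂ ^ 3 + z₁ ^ 3 * x₂ ^ 3 * y₂ ^ 3

variable (x₁ y₁ z₁ x₂ y₂ z₂ : R)

theorem prod_add :
    addX x₁ y₁ z₁ x₂ y₂ z₂ * addY x₁ y₁ z₁ x₂ y₂ z₂ * addZ x₁ y₁ z₁ x₂ y₂ z₂ =
      x₁ * y₁ * z₁ * mixedCubes x₁ y₁ z₁ x₂ y₂ z₂ -
        x₂ * y₂ * z₂ * mixedCubes x₂ y₂ z₂ x₁ y₁ z₁ := by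
  simp only [addX, addY, addZ, mixedCubes]
  ring

theorem cube_sum_add :
    addX x₁ y₁ z₁ x₂ y₂ z₂ ^ 3 + addY x₁ y₁ z₁ x₂ y₂ z₂ ^ 3 + addZ x₁ y₁ z₁ x₂ y₂ z₂ ^ 3 =
      (x₁ ^ 3 + y₁ ^ 3 + z₁ ^ 3) * mixedCubes x₁ y₁ z₁ x₂ y₂ z₂ -
        (x₂ ^ 3 + y₂ ^ 3 + z₂ ^ 3) * mixedCubes x₂ y₂ z₂ x₁ y₁ z₁ -
        3 * (x₁ * y₁ * z₁) * (x₂ * y₂ * z₂) *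
          ((x₁ ^ 3 + y₁ ^ 3 + z₁ ^ 3) * (x₂ * y₂ * z₂) -
            (x₂ ^ 3 + y₂ ^ 3 + z₂ ^ 3) * (x₁ * y₁ * z₁)) := by
  simp only [addX, addY, addZ, mixedCubes]
  ring

theorem form_add (μ : R) :
    form μ (addX x₁ y₁ z₁ x₂ y₂ z₂) (addY x₁ y₁ z₁ x₂ y₂ z₂) (addZ x₁ y₁ z₁ x₂ y₂ z₂) =
      form μ x₁ y₁ z₁ *
          (mixedCubes x₁ y₁ z₁ x₂ y₂ z₂ - 3 * (x₁ * y₁ * z₁) * (x₂ * y₂ * z₂) ^ 2) -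
        form μ x₂ y₂ z₂ *
          (mixedCubes x₂ y₂ z₂ x₁ y₁ z₁ - 3 * (x₁ * y₁ * z₁) ^ 2 * (x₂ * y₂ * z₂)) := by
  rw [form, cube_sum_add, prod_add, form, form]
  ring

theorem form_add_eq_zero {μ : R} (h₁ : form μ x₁ y₁ z₁ = 0) (h₂ : form μ x₂ y₂ z₂ = 0) :
    form μ (addX x₁ y₁ z₁ x₂ y₂ z₂) (addY x₁ y₁ z₁ x₂ y₂ z₂) (addZ x₁ y₁ z₁ x₂ y₂ z₂) = 0 := by
  rw [form_add, h₁, h₂]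
  ring

end HessianCurve

theorem hessian_addition_formula
    (R : Type*) [CommRing R] (μ : R) (x₁ y₁ z₁ x₂ y₂ z₂ : R)
    (h₁ : x₁ ^ 3 + y₁ ^ 3 + z₁ ^ 3 = 3 * μ * (x₁ * y₁ * z₁))
    (h₂ : x₂ ^ 3 + y₂ ^ 3 + z₂ ^ 3 = 3 * μ * (x₂ * y₂ * z₂)) :
    (x₂ * y₁ ^ 2 * z₂ - x₁ * y₂ ^ 2 * z₁) ^ 3 + (x₁ ^ 2 * y₂ * z₂ - x₂ ^ 2 * y₁ * z₁) ^ 3 +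
        (x₂ * y₂ * z₁ ^ 2 - x₁ * y₁ * z₂ ^ 2) ^ 3 =
      3 * μ * ((x₂ * y₁ ^ 2 * z₂ - x₁ * y₂ ^ 2 * z₁) * (x₁ ^ 2 * y₂ * z₂ - x₂ ^ 2 * y₁ * z₁) *
        (x₂ * y₂ * z₁ ^ 2 - x₁ * y₁ * z₂ ^ 2)) :=
  sub_eq_zero.mp <|
    HessianCurve.form_add_eq_zero x₁ y₁ z₁ x₂ y₂ z₂ (sub_eq_zero.mpr h₁) (sub_eq_zero.mpr h₂)
end

section
/- Let k be a field of characteristic ≠ 3 of the form 𝔽_q, let β ∈ k, and suppose the line y = ax + c (with a ∈ k) is a flex tangent to the affine curve x³ + y³ + β = 3xy, in the sense that the polynomial (a³+1)x³ + 3a(ac−1)x² + 3c(ac−1)x + (c³+β) is a constant multiple of (x+ℓ)³ for some ℓ ∈ k, with a³ ≠ −1. Then β is a cube in k. -/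
/-!
Comparing coefficients, `d = a³ + 1`, `a(ac − 1) = dℓ`, `c(ac − 1) = dℓ²` and
`c³ + β = dℓ³`. Eliminating `ℓ` from the middle two gives `(ac − 1)(c + a²) = 0`.
If `ac = 1` then `ℓ = 0` and `β = (−c)³`; if `c = −a²` then `ac − 1 = −d`, so `ℓ = −a`
and `β = (−a)³`.
-/

open Polynomial

theorem Polynomial.coeffs_eq_of_cubic_eq_C_mul_X_add_C_pow_three {R : Type*} [CommRing R]
    {p q r s d ℓ : R}
    (h : C p * X ^ 3 + C q * X ^ 2 + C r * X + C s = C d * (X + C ℓ) ^ 3) :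
    p = d ∧ q = 3 * d * ℓ ∧ r = 3 * d * ℓ ^ 2 ∧ s = d * ℓ ^ 3 := by
  have hcoeff (n : ℕ) := congrArg (coeff · n) h
  simp only [coeff_add, coeff_C_mul, coeff_X_pow, coeff_C, coeff_X, coeff_X_add_C_pow] at hcoeff
  have h0 := hcoeff 0
  have h1 := hcoeff 1
  have h2 := hcoeff 2
  have h3 := hcoeff 3
  norm_num at h0 h1 h2 h3
  exact ⟨h3, by rw [h2]; ring, by rw [h1]; ring, h0⟩

theorem exists_cube_eq_of_flex_coeffs {k : Type*} [Field k] (h3 : (3 : k) ≠ 0) {β a c ℓ d : k}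
    (hd : d ≠ 0) (hX3 : a ^ 3 + 1 = d) (hX2 : 3 * a * (a * c - 1) = 3 * d * ℓ)
    (hX1 : 3 * c * (a * c - 1) = 3 * d * ℓ ^ 2) (hX0 : c ^ 3 + β = d * ℓ ^ 3) :
    ∃ r : k, β = r ^ 3 := by
  have hX2' : a * (a * c - 1) = d * ℓ := mul_left_cancel₀ h3 (by linear_combination hX2)
  have hX1' : c * (a * c - 1) = d * ℓ ^ 2 := mul_left_cancel₀ h3 (by linear_combination hX1)
  have hfactor : (a * c - 1) * (c + a ^ 2) = 0 := by
    linear_combination d * hX1' - (a * (a * c - 1) + d * ℓ) * hX2' + c * (a * c - 1) * hX3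
  rcases mul_eq_zero.mp hfactor with hac | hc
  · have hℓ : ℓ = 0 := by
      simpa [hac, hd, eq_comm] using hX2'
    exact ⟨-c, by linear_combination hX0 + d * ℓ ^ 2 * hℓ⟩
  · have hℓ : ℓ = -a := mul_left_cancel₀ hd (by linear_combination -hX2' + a ^ 2 * hc - a * hX3)
    exact ⟨-a, by
      linear_combination hX0 + d * (ℓ ^ 2 - a * ℓ + a ^ 2) * hℓ - (c ^ 2 - c * a ^ 2 + a ^ 4) * hc
        + a ^ 3 * hX3⟩

theorem flex_tangent_beta_is_cube_general
    (k : Type*) [Field k] (h3 : ringChar k ≠ 3)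
    (β a c : k) (ha : a ^ 3 ≠ -1)
    (hflex : ∃ ℓ d : k,
      (C (a ^ 3 + 1) * X ^ 3 + C (3 * a * (a * c - 1)) * X ^ 2 +
          C (3 * c * (a * c - 1)) * X + C (c ^ 3 + β) : Polynomial k) =
        C d * (X + C ℓ) ^ 3) :
    ∃ r : k, β = r ^ 3 := by
  obtain ⟨ℓ, d, h⟩ := hflex
  obtain ⟨hX3, hX2, hX1, hX0⟩ := coeffs_eq_of_cubic_eq_C_mul_X_add_C_pow_three h
  have hd : d ≠ 0 := hX3 ▸ fun h ↦ ha (eq_neg_of_add_eq_zero_left h)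
  have h3' : (3 : k) ≠ 0 := by
    exact_mod_cast CharP.cast_ne_zero_of_ne_of_prime k Nat.prime_three h3
  exact exists_cube_eq_of_flex_coeffs h3' hd hX3 hX2 hX1 hX0

open Polynomial in
/-- If the line `y = ax + c` is a flex tangent to `x³ + y³ + β = 3xy` over a finite
field of characteristic ≠ 3 (with `a³ ≠ −1`), then `β` is a cube. -/
theorem flex_tangent_beta_is_cube
    (k : Type*) [Field k] [Fintype k] (h3 : ringChar k ≠ 3)
    (β a c : k) (ha : a ^ 3 ≠ -1)
    (hflex : ∃ ℓ d : k,
      (C (a ^ 3 + 1) * X ^ 3 + C (3 * a * (a * c - 1)) * X ^ 2 +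
          C (3 * c * (a * c - 1)) * X + C (c ^ 3 + β) : Polynomial k) =
        C d * (X + C ℓ) ^ 3) :
    ∃ r : k, β = r ^ 3 :=
  flex_tangent_beta_is_cube_general k h3 β a c ha hflex
end

section
/- Let G be a group, H ⊴ G a normal subgroup of finite index, and suppose the projection G → G/H admits a section with image a subgroup Σ ⊆ G (so every g ∈ G is uniquely g = hσ with h ∈ H, σ ∈ Σ). Let N be a left H-module and f : H → N a 1-cocycle. Define s : G → Hom_{ℤ[H]}(ℤ[G], N) by s(hσ)([ξ]) = f(ξhξ⁻¹) for h ∈ H, σ, ξ ∈ Σ, extended ℤ[H]-linearly in the variable. Then s is a 1-cocycle for G with values in the induced module Ind_H^G N = Hom_{ℤ[H]}(ℤ[G], N), and its restriction to H followed by evaluation at [e] equals f. -/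
/-!
Uniqueness of the factorization `g = ρH(g) · rhoS(g)` makes `rhoS` multiplicative and `ρH` a
crossed homomorphism for the conjugation action: `ρH(g₁g₂) = ρH(g₁) · σ₁ ρH(g₂) σ₁⁻¹` with
`σ₁ = rhoS(g₁)`. Writing `ξ = rhoS(x)`, the argument of `f` in `s(g₁g₂)(x)` is therefore the
product of `ξ ρH(g₁) ξ⁻¹` and `(ξσ₁) ρH(g₂) (ξσ₁)⁻¹`, and the cocycle identity of `f` splits
it into the two terms `s(g₂)(x g₁)` and `s(g₁)(x)`.
-/

/-- Given a normal subgroup `H ⊴ G` with factorization data `g = ρH(g) · rhoS(g)`,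
an `H`-module `N` and `f : H → N`, the Shapiro 1-cochain
`s : G → (ℤ[G] → N)`, described on group elements by
`s(g)(x) = ρH(x) • f( rhoS(x) · ρH(g) · rhoS(x)⁻¹ )` (the `ℤ[H]`-linear extension in
the variable `x` of `s(hσ)([ξ]) = f(ξ h ξ⁻¹)`). -/
def shapiroCochain {G : Type*} [Group G] {N : Type*} [AddCommGroup N]
    {H : Subgroup G} [DistribMulAction H N] (hH : H.Normal)
    (ρH : G → H) (rhoS : G → G) (f : H → N) : G → G → N :=
  fun g x =>
    (ρH x) • f ⟨rhoS x * (ρH g : G) * (rhoS x)⁻¹, hH.conj_mem (ρH g : G) (ρH g).2 (rhoS x)⟩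

namespace SemidirectFactorization

variable {G : Type*} [Group G] {H Sig : Subgroup G} {ρH : G → H} {rhoS : G → G}

theorem rhoH_coe
    (huniq : ∀ (h : H) (σ : G), σ ∈ Sig → ρH ((h : G) * σ) = h ∧ rhoS ((h : G) * σ) = σ)
    (h : H) : ρH h = h := by
  simpa using (huniq h 1 Sig.one_mem).1

theorem rhoS_coe
    (huniq : ∀ (h : H) (σ : G), σ ∈ Sig → ρH ((h : G) * σ) = h ∧ rhoS ((h : G) * σ) = σ)
    (h : H) : rhoS h = 1 := by
  simpa using (huniq h 1 Sig.one_mem).2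

variable [H.Normal]

theorem mul_eq_factorization (hfact : ∀ g : G, (ρH g : G) * rhoS g = g) (g₁ g₂ : G) :
    g₁ * g₂ = ((ρH g₁ * MulAut.conjNormal (rhoS g₁) (ρH g₂) : H) : G) * (rhoS g₁ * rhoS g₂) := by
  conv_lhs => rw [← hfact g₁, ← hfact g₂]
  simp only [Subgroup.coe_mul, MulAut.conjNormal_apply]
  group

theorem rhoH_mul_rhoS_mul (hrhoS : ∀ g : G, rhoS g ∈ Sig)
    (hfact : ∀ g : G, (ρH g : G) * rhoS g = g)
    (huniq : ∀ (h : H) (σ : G), σ ∈ Sig → ρH ((h : G) * σ) = h ∧ rhoS ((h : G) * σ) = σ)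
    (g₁ g₂ : G) :
    ρH (g₁ * g₂) = ρH g₁ * MulAut.conjNormal (rhoS g₁) (ρH g₂) ∧
      rhoS (g₁ * g₂) = rhoS g₁ * rhoS g₂ := by
  rw [mul_eq_factorization hfact]
  exact huniq _ _ (Sig.mul_mem (hrhoS g₁) (hrhoS g₂))

end SemidirectFactorization

open SemidirectFactorization

theorem shapiroCochain_apply {G : Type*} [Group G] {N : Type*} [AddCommGroup N]
    {H : Subgroup G} [DistribMulAction H N] [hH : H.Normal] {ρH : G → H} {rhoS : G → G}
    {f : H → N} (g x : G) :
    shapiroCochain hH ρH rhoS f g x = ρH x • f (MulAut.conjNormal (rhoS x) (ρH g)) :=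
  rfl

theorem shapiro_one_cocycle_general
    (G : Type*) [Group G] (N : Type*) [AddCommGroup N]
    (H : Subgroup G) [DistribMulAction H N] (hH : H.Normal)
    (Sig : Subgroup G) (ρH : G → H) (rhoS : G → G)
    (hrhoS : ∀ g : G, rhoS g ∈ Sig)
    (hfact : ∀ g : G, (ρH g : G) * rhoS g = g)
    (huniq : ∀ (h : H) (σ : G), σ ∈ Sig → ρH ((h : G) * σ) = h ∧ rhoS ((h : G) * σ) = σ)
    (f : H → N) (hf : ∀ h₁ h₂ : H, f (h₁ * h₂) = h₁ • f h₂ + f h₁) :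
    -- each `s(g)` is `ℤ[H]`-linear, i.e. lies in the induced module
    (∀ (g : G) (h : H) (x : G),
        shapiroCochain hH ρH rhoS f g ((h : G) * x) = h • shapiroCochain hH ρH rhoS f g x) ∧
    -- `s` is a 1-cocycle: `s(g₁g₂) = g₁ · s(g₂) + s(g₁)`, where `(g·φ)(x) = φ(xg)`
    (∀ g₁ g₂ x : G,
        shapiroCochain hH ρH rhoS f (g₁ * g₂) x =
          shapiroCochain hH ρH rhoS f g₂ (x * g₁) + shapiroCochain hH ρH rhoS f g₁ x) ∧
    -- the restriction of `s` to `H`, evaluated at `[e]`, is `f`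
    (∀ h : H, shapiroCochain hH ρH rhoS f (h : G) 1 = f h) := by
  have hmul := rhoH_mul_rhoS_mul hrhoS hfact huniq
  refine ⟨fun g h x => ?_, fun g₁ g₂ x => ?_, fun h => ?_⟩
  · simp only [shapiroCochain_apply, (hmul h x).1, (hmul h x).2, rhoH_coe huniq, rhoS_coe huniq,
      one_mul, map_one, MulAut.one_apply, mul_smul]
  · simp only [shapiroCochain_apply, (hmul g₁ g₂).1, (hmul x g₁).1, (hmul x g₁).2, map_mul,
      MulAut.mul_apply, hf, smul_add, mul_smul]
  · have hρ1 : ρH 1 = 1 := by simpa using rhoH_coe huniq 1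
    have hσ1 : rhoS 1 = 1 := by simpa using rhoS_coe huniq 1
    rw [shapiroCochain_apply, hρ1, hσ1, map_one, MulAut.one_apply, one_smul, rhoH_coe huniq]

/-- Shapiro's lemma on inhomogeneous 1-cocycles: if `G = H ⋊ Σ` with `H` normal
of finite index, `N` is an `H`-module and `f : H → N` is a 1-cocycle, then the
function `s(hσ)([ξ]) = f(ξhξ⁻¹)` (extended `ℤ[H]`-linearly) is a 1-cocycle of
`G` with values in the induced module
`Ind_H^G N = Hom_{ℤ[H]}(ℤ[G], N) = {φ : G → N | φ(h·x) = h • φ(x)}`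
(with `G`-action `(g·φ)(x) = φ(xg)`), and evaluating its restriction to `H`
at `[e]` recovers `f`. -/
theorem shapiro_one_cocycle
    (G : Type*) [Group G] (N : Type*) [AddCommGroup N]
    (H : Subgroup G) [DistribMulAction H N] (hH : H.Normal) [H.FiniteIndex]
    (Sig : Subgroup G) (ρH : G → H) (rhoS : G → G)
    (hrhoS : ∀ g : G, rhoS g ∈ Sig)
    (hfact : ∀ g : G, (ρH g : G) * rhoS g = g)
    (huniq : ∀ (h : H) (σ : G), σ ∈ Sig → ρH ((h : G) * σ) = h ∧ rhoS ((h : G) * σ) = σ)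
    (f : H → N) (hf : ∀ h₁ h₂ : H, f (h₁ * h₂) = h₁ • f h₂ + f h₁) :
    -- each `s(g)` is `ℤ[H]`-linear, i.e. lies in the induced module
    (∀ (g : G) (h : H) (x : G),
        shapiroCochain hH ρH rhoS f g ((h : G) * x) = h • shapiroCochain hH ρH rhoS f g x) ∧
    -- `s` is a 1-cocycle: `s(g₁g₂) = g₁ · s(g₂) + s(g₁)`, where `(g·φ)(x) = φ(xg)`
    (∀ g₁ g₂ x : G,
        shapiroCochain hH ρH rhoS f (g₁ * g₂) x =
          shapiroCochain hH ρH rhoS f g₂ (x * g₁) + shapiroCochain hH ρH rhoS f g₁ x) ∧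
    -- the restriction of `s` to `H`, evaluated at `[e]`, is `f`
    (∀ h : H, shapiroCochain hH ρH rhoS f (h : G) 1 = f h) :=
  shapiro_one_cocycle_general G N H hH Sig ρH rhoS hrhoS hfact huniq f hf
end
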